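/- Suppose the probability distributions α₀, α₁ on A and β₀, β₁ on B all have full support (every entry positive). Then the classical cheating probabilities satisfy C_{B,0} = C_{B,1} = 1 and C_{A,0} = C_{A,1} = (1/2) + (1/2)Δ(β₀,β₁). -/

import Mathlib

open Finset

namespace BCCF

variable {n : ℕ}

/-- Membership in Bob's cheating polytope `P_B`, encoded on full products:
`p j` plays the role of `p_{j+1}` and is required to depend only on the
coordinates `x_1,…,x_{j+1}` and `y_1,…,y_{j+1}`. -/
def MemBob (A B : Fin n → Type) [∀ i, Fintype (A i)] [∀ i, Fintype (B i)]
    (p : Fin n → ((i : Fin n) → A i) → ((i : Fin n) → B i) → ℝ) : Prop :=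
  (∀ j x y, 0 ≤ p j x y) ∧
  (∀ (j : Fin n) (x x' : (i : Fin n) → A i) (y y' : (i : Fin n) → B i),
      (∀ i, i ≤ j → x i = x' i) → (∀ i, i ≤ j → y i = y' i) → p j x y = p j x' y') ∧
  (∀ j : Fin n, (j : ℕ) = 0 → ∀ x y, ∑ b : B j, p j x (Function.update y j b) = 1) ∧
  (∀ j k : Fin n, (j : ℕ) = (k : ℕ) + 1 → ∀ x y,
      ∑ b : B j, p j x (Function.update y j b) = p k x y)

/-- Membership in Alice's cheating polytope `P_A`, encoded on full products:
`s j` plays the role of `s_{j+1}` (depending on `x_1,…,x_{j+1}` and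
`y_1,…,y_j`) and `sF` plays the role of the final function `s` on `{0,1}×A×B`. -/
def MemAlice (A B : Fin n → Type) [∀ i, Fintype (A i)] [∀ i, Fintype (B i)] (hn : 0 < n)
    (s : Fin n → ((i : Fin n) → A i) → ((i : Fin n) → B i) → ℝ)
    (sF : Bool → ((i : Fin n) → A i) → ((i : Fin n) → B i) → ℝ) : Prop :=
  (∀ j x y, 0 ≤ s j x y) ∧
  (∀ a x y, 0 ≤ sF a x y) ∧
  (∀ (j : Fin n) (x x' : (i : Fin n) → A i) (y y' : (i : Fin n) → B i),
      (∀ i, i ≤ j → x i = x' i) → (∀ i, i < j → y i = y' i) → s j x y = s j x' y') ∧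
  (∀ j : Fin n, (j : ℕ) = 0 → ∀ x y, ∑ a : A j, s j (Function.update x j a) y = 1) ∧
  (∀ j k : Fin n, (j : ℕ) = (k : ℕ) + 1 → ∀ x y,
      ∑ a : A j, s j (Function.update x j a) y = s k x y) ∧
  (∀ x y, sF false x y + sF true x y = s ⟨n - 1, Nat.sub_lt hn Nat.one_pos⟩ x y)

/-- Fidelity of two nonnegative vectors. -/
noncomputable def fid {ι : Type} [Fintype ι] (u v : ι → ℝ) : ℝ :=
  (∑ i, Real.sqrt (u i * v i)) ^ 2

/-- `u` is a probability distribution. -/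
def IsProbDist {ι : Type} [Fintype ι] (u : ι → ℝ) : Prop :=
  (∀ i, 0 ≤ u i) ∧ ∑ i, u i = 1

/-- Trace distance of two vectors. -/
noncomputable def tdist {ι : Type} [Fintype ι] (u v : ι → ℝ) : ℝ :=
  (1 / 2) * ∑ i, |u i - v i|

/-- Objective value of cheating Bob forcing outcome `c` in the quantum protocol. -/
noncomputable def bobObjQ (A B : Fin n → Type) [∀ i, Fintype (A i)] [∀ i, Fintype (B i)]
    (hn : 0 < n) (α : Bool → ((i : Fin n) → A i) → ℝ)
    (β : Bool → ((i : Fin n) → B i) → ℝ) (c : Bool)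
    (p : Fin n → ((i : Fin n) → A i) → ((i : Fin n) → B i) → ℝ) : ℝ :=
  (1 / 2) * ∑ a : Bool,
    fid (fun y => ∑ x, α a x * p ⟨n - 1, Nat.sub_lt hn Nat.one_pos⟩ x y) (β (Bool.xor a c))

/-- Objective value of cheating Alice forcing outcome `c` in the quantum protocol. -/
noncomputable def aliceObjQ (A B : Fin n → Type) [∀ i, Fintype (A i)] [∀ i, Fintype (B i)]
    (α : Bool → ((i : Fin n) → A i) → ℝ)
    (β : Bool → ((i : Fin n) → B i) → ℝ) (c : Bool)
    (sF : Bool → ((i : Fin n) → A i) → ((i : Fin n) → B i) → ℝ) : ℝ :=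
  (1 / 2) * ∑ a : Bool, ∑ y, β (Bool.xor a c) y * fid (fun x => sF a x y) (α a)

/-- Objective value of cheating Bob forcing outcome `c` in the classical protocol. -/
noncomputable def bobObjC (A B : Fin n → Type) [∀ i, Fintype (A i)] [∀ i, Fintype (B i)]
    (hn : 0 < n) (α : Bool → ((i : Fin n) → A i) → ℝ)
    (β : Bool → ((i : Fin n) → B i) → ℝ) (c : Bool)
    (p : Fin n → ((i : Fin n) → A i) → ((i : Fin n) → B i) → ℝ) : ℝ :=
  (1 / 2) * ∑ a : Bool, ∑ y ∈ univ.filter (fun y => β (Bool.xor a c) y ≠ 0),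
      ∑ x, α a x * p ⟨n - 1, Nat.sub_lt hn Nat.one_pos⟩ x y

/-- Objective value of cheating Alice forcing outcome `c` in the classical protocol. -/
noncomputable def aliceObjC (A B : Fin n → Type) [∀ i, Fintype (A i)] [∀ i, Fintype (B i)]
    (α : Bool → ((i : Fin n) → A i) → ℝ)
    (β : Bool → ((i : Fin n) → B i) → ℝ) (c : Bool)
    (sF : Bool → ((i : Fin n) → A i) → ((i : Fin n) → B i) → ℝ) : ℝ :=
  (1 / 2) * ∑ a : Bool, ∑ y, β (Bool.xor a c) y *
      ∑ x ∈ univ.filter (fun x => α a x ≠ 0), sF a x y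

/-- The set of values of cheating Bob's quantum strategies for outcome `c`. -/
def bobValsQ (A B : Fin n → Type) [∀ i, Fintype (A i)] [∀ i, Fintype (B i)]
    (hn : 0 < n) (α : Bool → ((i : Fin n) → A i) → ℝ)
    (β : Bool → ((i : Fin n) → B i) → ℝ) (c : Bool) : Set ℝ :=
  {v | ∃ p, MemBob A B p ∧ v = bobObjQ A B hn α β c p}

/-- The set of values of cheating Alice's quantum strategies for outcome `c`. -/
def aliceValsQ (A B : Fin n → Type) [∀ i, Fintype (A i)] [∀ i, Fintype (B i)]
    (hn : 0 < n) (α : Bool → ((i : Fin n) → A i) → ℝ)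
    (β : Bool → ((i : Fin n) → B i) → ℝ) (c : Bool) : Set ℝ :=
  {v | ∃ s sF, MemAlice A B hn s sF ∧ v = aliceObjQ A B α β c sF}

/-- The set of values of cheating Bob's classical strategies for outcome `c`. -/
def bobValsC (A B : Fin n → Type) [∀ i, Fintype (A i)] [∀ i, Fintype (B i)]
    (hn : 0 < n) (α : Bool → ((i : Fin n) → A i) → ℝ)
    (β : Bool → ((i : Fin n) → B i) → ℝ) (c : Bool) : Set ℝ :=
  {v | ∃ p, MemBob A B p ∧ v = bobObjC A B hn α β c p}

/-- The set of values of cheating Alice's classical strategies for outcome `c`. -/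
def aliceValsC (A B : Fin n → Type) [∀ i, Fintype (A i)] [∀ i, Fintype (B i)]
    (hn : 0 < n) (α : Bool → ((i : Fin n) → A i) → ℝ)
    (β : Bool → ((i : Fin n) → B i) → ℝ) (c : Bool) : Set ℝ :=
  {v | ∃ s sF, MemAlice A B hn s sF ∧ v = aliceObjC A B α β c sF}

end BCCF

namespace BCCF



lemma sum_update_sum {ι : Type} [DecidableEq ι] [Fintype ι] (B : ι → Type) [∀ i, Fintype (B i)]
    (g : (∀ i, B i) → ℝ) (j : ι) :
    ∑ y : ∀ i, B i, ∑ b : B j, g (Function.update y j b)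
      = (Fintype.card (B j) : ℝ) * ∑ y, g y := by
  have key : ∀ (y : ∀ i, B i) (b : B j),
      Function.update y j b = (Equiv.piSplitAt j B).symm (b, fun k => y k) := by
    intro y b
    funext k
    by_cases h : k = j
    · subst h; simp [Equiv.piSplitAt_symm_apply]
    · simp [Equiv.piSplitAt_symm_apply, h, Function.update_of_ne h]
  have key2 : ∀ z : B j × (∀ k : {k // k ≠ j}, B k),
      (fun k : {k // k ≠ j} => ((Equiv.piSplitAt j B).symm z) k.1) = z.2 := by
    intro z; funext k; simp [Equiv.piSplitAt_symm_apply, k.2]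
  calc ∑ y : ∀ i, B i, ∑ b : B j, g (Function.update y j b)
      = ∑ z : B j × (∀ k : {k // k ≠ j}, B k),
          ∑ b : B j, g (Function.update ((Equiv.piSplitAt j B).symm z) j b) := by
        rw [← Equiv.sum_comp (Equiv.piSplitAt j B).symm]
    _ = ∑ z : B j × (∀ k : {k // k ≠ j}, B k),
          ∑ b : B j, g ((Equiv.piSplitAt j B).symm (b, z.2)) := by
        apply Finset.sum_congr rfl; intro z _
        apply Finset.sum_congr rfl; intro b _
        rw [key, key2]
    _ = (Fintype.card (B j) : ℝ) * ∑ y, g y := by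
        rw [Fintype.sum_prod_type, Finset.sum_comm]
        rw [← Equiv.sum_comp (Equiv.piSplitAt j B).symm g, Fintype.sum_prod_type]
        simp [Finset.sum_const, nsmul_eq_mul, Finset.mul_sum]
        ring_nf
        rw [Finset.sum_comm]

lemma telescope {n : ℕ} (hn : 0 < n) (B : Fin n → Type) [∀ i, Fintype (B i)]
    [∀ i, Nonempty (B i)] (f : Fin n → (∀ i, B i) → ℝ)
    (h0 : ∀ j : Fin n, (j:ℕ) = 0 → ∀ y, ∑ b : B j, f j (Function.update y j b) = 1)
    (hs : ∀ j k : Fin n, (j:ℕ) = (k:ℕ)+1 → ∀ y,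
        ∑ b : B j, f j (Function.update y j b) = f k y) :
    ∑ y, f ⟨n-1, Nat.sub_lt hn Nat.one_pos⟩ y = 1 := by
  set P : ℕ → ℝ := fun m => ∏ i ∈ univ.filter (fun i : Fin n => (i:ℕ) ≤ m),
    (Fintype.card (B i) : ℝ) with hP
  have claim : ∀ m, ∀ h : m < n, (∑ y, f ⟨m, h⟩ y) * P m
      = ∏ i : Fin n, (Fintype.card (B i) : ℝ) := by
    intro m
    induction m with
    | zero =>
      intro h
      have e1 : ∑ y : ∀ i, B i, ∑ b : B (⟨0,h⟩ : Fin n),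
          f ⟨0,h⟩ (Function.update y ⟨0,h⟩ b) = ∑ y : ∀ i, B i, (1:ℝ) := by
        exact Finset.sum_congr rfl fun y _ => h0 ⟨0,h⟩ rfl y
      rw [sum_update_sum] at e1
      have e2 : (∑ y : ∀ i, B i, (1:ℝ)) = ∏ i : Fin n, (Fintype.card (B i) : ℝ) := by
        simp [Fintype.card_pi]
      have e3 : P 0 = (Fintype.card (B (⟨0,h⟩ : Fin n)) : ℝ) := by
        have : univ.filter (fun i : Fin n => (i:ℕ) ≤ 0) = {(⟨0,h⟩ : Fin n)} := by
          ext i; simp [Fin.ext_iff, Nat.le_zero]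
        rw [hP]; simp only [this, Finset.prod_singleton]
      rw [e3, mul_comm, e1, e2]
    | succ m ih =>
      intro h
      have hm : m < n := Nat.lt_of_succ_lt h
      set j : Fin n := ⟨m+1, h⟩
      set k : Fin n := ⟨m, hm⟩
      have e1 : ∑ y : ∀ i, B i, ∑ b : B j, f j (Function.update y j b)
          = ∑ y, f k y := Finset.sum_congr rfl fun y _ => hs j k rfl y
      rw [sum_update_sum] at e1
      have e3 : P (m+1) = (Fintype.card (B j) : ℝ) * P m := by
        have hins : univ.filter (fun i : Fin n => (i:ℕ) ≤ m+1)
            = insert j (univ.filter (fun i : Fin n => (i:ℕ) ≤ m)) := by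
          ext i
          simp only [Finset.mem_filter, Finset.mem_univ, true_and, Finset.mem_insert,
            Fin.ext_iff]
          have hjv : (j : ℕ) = m + 1 := rfl
          omega
        have hj : j ∉ univ.filter (fun i : Fin n => (i:ℕ) ≤ m) := by simp [j]
        rw [hP]; simp only [hins, Finset.prod_insert hj]
      rw [e3, ← mul_assoc, mul_comm (∑ y, f j y), e1, ih hm]
  have hlast := claim (n-1) (Nat.sub_lt hn Nat.one_pos)
  have elast : P (n-1) = ∏ i : Fin n, (Fintype.card (B i) : ℝ) := by
    have : univ.filter (fun i : Fin n => (i:ℕ) ≤ n-1) = univ := by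
      ext i; simp; omega
    rw [hP]; simp only [this]
  rw [elast] at hlast
  have hpos : (0:ℝ) < ∏ i : Fin n, (Fintype.card (B i) : ℝ) :=
    Finset.prod_pos fun i _ => by exact_mod_cast Fintype.card_pos
  exact mul_right_cancel₀ (ne_of_gt hpos) (hlast.trans (one_mul _).symm)


lemma bobObjC_eq_one {n : ℕ} (hn : 0 < n) (A B : Fin n → Type)
    [∀ i, Fintype (A i)] [∀ i, Fintype (B i)] [∀ i, Nonempty (B i)]
    (α : Bool → ((i : Fin n) → A i) → ℝ) (β : Bool → ((i : Fin n) → B i) → ℝ)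
    (hα : ∀ a, IsProbDist (α a)) (hβpos : ∀ b y, 0 < β b y) (c : Bool)
    (p : Fin n → ((i : Fin n) → A i) → ((i : Fin n) → B i) → ℝ)
    (hp : MemBob A B p) : bobObjC A B hn α β c p = 1 := by
  classical
  obtain ⟨hpos, hdep, h0, hs⟩ := hp
  have hsum : ∀ x, ∑ y, p ⟨n-1, Nat.sub_lt hn Nat.one_pos⟩ x y = 1 := fun x =>
    telescope hn B (fun j y => p j x y) (fun j hj y => h0 j hj x y)
      (fun j k hjk y => hs j k hjk x y)
  unfold bobObjC
  have hone : ∀ a : Bool,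
      (∑ y ∈ univ.filter (fun y => β (Bool.xor a c) y ≠ 0),
        ∑ x, α a x * p ⟨n-1, Nat.sub_lt hn Nat.one_pos⟩ x y) = 1 := by
    intro a
    rw [Finset.filter_true_of_mem (fun y _ => (hβpos _ y).ne'), Finset.sum_comm]
    calc ∑ x, ∑ y, α a x * p ⟨n-1, Nat.sub_lt hn Nat.one_pos⟩ x y
        = ∑ x, α a x * ∑ y, p ⟨n-1, Nat.sub_lt hn Nat.one_pos⟩ x y := by
          simp [Finset.mul_sum]
      _ = ∑ x, α a x := by simp [hsum]
      _ = 1 := (hα a).2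
  rw [Finset.sum_congr rfl fun a _ => hone a]
  simp

lemma half_sum_max {ι : Type} [Fintype ι] (u v : ι → ℝ)
    (hu : ∑ i, u i = 1) (hv : ∑ i, v i = 1) :
    (1/2) * ∑ i, max (u i) (v i) = 1/2 + (1/2) * tdist u v := by
  have hmax : ∀ i, max (u i) (v i) = (u i + v i)/2 + |u i - v i|/2 := by
    intro i
    rcases le_total (u i) (v i) with h | h
    · rw [max_eq_right h, abs_of_nonpos (by linarith)]; ring
    · rw [max_eq_left h, abs_of_nonneg (by linarith)]; ring
  rw [Finset.sum_congr rfl fun i _ => hmax i, Finset.sum_add_distrib, tdist]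
  rw [← Finset.sum_div, ← Finset.sum_div, Finset.sum_add_distrib, hu, hv]
  ring

lemma aliceObjC_le {n : ℕ} (hn : 0 < n) (A B : Fin n → Type)
    [∀ i, Fintype (A i)] [∀ i, Nonempty (A i)] [∀ i, Fintype (B i)]
    (α : Bool → ((i : Fin n) → A i) → ℝ) (β : Bool → ((i : Fin n) → B i) → ℝ)
    (hβ : ∀ b, IsProbDist (β b)) (hαpos : ∀ a x, 0 < α a x) (c : Bool)
    (s : Fin n → ((i : Fin n) → A i) → ((i : Fin n) → B i) → ℝ)
    (sF : Bool → ((i : Fin n) → A i) → ((i : Fin n) → B i) → ℝ)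
    (hm : MemAlice A B hn s sF) :
    aliceObjC A B α β c sF ≤ 1/2 + (1/2) * tdist (β false) (β true) := by
  classical
  obtain ⟨hsnn, hsFnn, hdep, h0, hrec, hsplit⟩ := hm
  set Q : Bool → ((i : Fin n) → B i) → ℝ := fun a y => ∑ x, sF a x y with hQdef
  have hQnn : ∀ a y, 0 ≤ Q a y := fun a y => Finset.sum_nonneg fun x _ => hsFnn a x y
  have hQsum : ∀ y, Q false y + Q true y = 1 := by
    intro y
    have htel : ∑ x, s ⟨n-1, Nat.sub_lt hn Nat.one_pos⟩ x y = 1 :=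
      telescope hn A (fun j x => s j x y) (fun j hj x => h0 j hj x y)
        (fun j k hjk x => hrec j k hjk x y)
    rw [hQdef]
    simp only [← Finset.sum_add_distrib]
    rw [Finset.sum_congr rfl fun x _ => hsplit x y]
    exact htel
  have hobj : aliceObjC A B α β c sF
      = (1/2) * ∑ y, ∑ a : Bool, β (Bool.xor a c) y * Q a y := by
    unfold aliceObjC
    rw [Finset.sum_comm]
    congr 1
    refine Finset.sum_congr rfl fun y _ => Finset.sum_congr rfl fun a _ => ?_
    rw [Finset.filter_true_of_mem (fun x _ => (hαpos a x).ne')]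
  rw [hobj]
  have hbound : ∀ y, ∑ a : Bool, β (Bool.xor a c) y * Q a y
      ≤ max (β false y) (β true y) := by
    intro y
    have hble : ∀ b : Bool, β b y ≤ max (β false y) (β true y) := by
      intro b; cases b
      · exact le_max_left _ _
      · exact le_max_right _ _
    calc ∑ a : Bool, β (Bool.xor a c) y * Q a y
        ≤ ∑ a : Bool, max (β false y) (β true y) * Q a y :=
          Finset.sum_le_sum fun a _ =>
            mul_le_mul_of_nonneg_right (hble _) (hQnn a y)
      _ = max (β false y) (β true y) * (Q false y + Q true y) := by
          rw [Fintype.sum_bool]; ring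
      _ = max (β false y) (β true y) := by rw [hQsum y, mul_one]
  calc (1/2) * ∑ y, ∑ a : Bool, β (Bool.xor a c) y * Q a y
      ≤ (1/2) * ∑ y, max (β false y) (β true y) := by
        have := Finset.sum_le_sum fun y (_ : y ∈ univ) => hbound y
        linarith
    _ = 1/2 + (1/2) * tdist (β false) (β true) :=
        half_sum_max _ _ (hβ false).2 (hβ true).2

lemma alice_witness {n : ℕ} (hn : 0 < n) (A B : Fin n → Type)
    [∀ i, Fintype (A i)] [∀ i, Nonempty (A i)] [∀ i, Fintype (B i)] [∀ i, Nonempty (B i)]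
    (α : Bool → ((i : Fin n) → A i) → ℝ) (β : Bool → ((i : Fin n) → B i) → ℝ)
    (hβ : ∀ b, IsProbDist (β b)) (hαpos : ∀ a x, 0 < α a x) (c : Bool) :
    (1/2 + (1/2) * tdist (β false) (β true)) ∈ aliceValsC A B hn α β c := by
  classical
  set x₀ : ∀ i, A i := fun i => Classical.arbitrary (A i) with hx₀
  set L : Fin n := ⟨n-1, Nat.sub_lt hn Nat.one_pos⟩ with hL
  set g : ((i : Fin n) → B i) → Bool :=
    fun y => decide (β (Bool.xor false c) y < β (Bool.xor true c) y) with hg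
  set s : Fin n → ((i : Fin n) → A i) → ((i : Fin n) → B i) → ℝ :=
    fun j x _ => if (∀ i, i ≤ j → x i = x₀ i) then 1 else 0 with hsdef
  set sF : Bool → ((i : Fin n) → A i) → ((i : Fin n) → B i) → ℝ :=
    fun a x y => (if a = g y then (1:ℝ) else 0) *
      (if (∀ i, i ≤ L → x i = x₀ i) then 1 else 0) with hsFdef
  refine ⟨s, sF, ⟨?_, ?_, ?_, ?_, ?_, ?_⟩, ?_⟩
  · intro j x y; rw [hsdef]; dsimp only; split_ifs <;> norm_num
  · intro a x y; rw [hsFdef]; dsimp only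
    split_ifs <;> norm_num
  · intro j x x' y y' hx _
    rw [hsdef]; dsimp only
    refine if_congr ⟨fun h i hi => ?_, fun h i hi => ?_⟩ rfl rfl
    · rw [← hx i hi]; exact h i hi
    · rw [hx i hi]; exact h i hi
  · intro j hj x y
    have hcond : ∀ a : A j,
        (∀ i, i ≤ j → Function.update x j a i = x₀ i) ↔ a = x₀ j := by
      intro a
      constructor
      · intro h
        have := h j le_rfl
        simpa using this
      · intro h i hi
        have hij : i = j := by
          have h1 := Fin.le_def.mp hi
          exact Fin.ext (by omega)
        subst hij
        simpa using h
    rw [hsdef]; dsimp only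
    rw [Finset.sum_congr rfl fun a _ => if_congr (hcond a) rfl rfl]
    simp
  · intro j k hjk x y
    have hcond : ∀ a : A j,
        (∀ i, i ≤ j → Function.update x j a i = x₀ i)
          ↔ (a = x₀ j ∧ ∀ i, i ≤ k → x i = x₀ i) := by
      intro a
      constructor
      · intro h
        refine ⟨by simpa using h j le_rfl, fun i hi => ?_⟩
        have hij : i ≠ j := by
          intro he; subst he
          have := Fin.le_def.mp hi; omega
        have hile : i ≤ j := by
          have := Fin.le_def.mp hi
          exact Fin.le_def.mpr (by omega)
        have := h i hile
        rwa [Function.update_of_ne hij] at this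
      · rintro ⟨ha, hk⟩ i hi
        by_cases hij : i = j
        · subst hij; simpa using ha
        · rw [Function.update_of_ne hij]
          refine hk i ?_
          have h1 := Fin.le_def.mp hi
          have h2 : (i : ℕ) ≠ (j : ℕ) := fun he => hij (Fin.ext he)
          exact Fin.le_def.mpr (by omega)
    rw [hsdef]; dsimp only
    rw [Finset.sum_congr rfl fun a _ => if_congr (hcond a) rfl rfl]
    by_cases hC : ∀ i, i ≤ k → x i = x₀ i
    · have h2 : ∀ a : A j, (a = x₀ j ∧ ∀ i, i ≤ k → x i = x₀ i) ↔ a = x₀ j :=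
        fun a => and_iff_left hC
      rw [Finset.sum_congr rfl fun a _ => if_congr (h2 a) rfl rfl, if_pos hC]
      simp
    · simp [hC]
  · intro x y
    rw [hsdef, hsFdef, hL]; dsimp only
    cases hgy : g y <;> simp [hgy]
  · have hsum1 : ∀ y : (i : Fin n) → B i, ∑ x : (i : Fin n) → A i, (if (∀ i, i ≤ L → x i = x₀ i) then (1:ℝ) else 0) = 1 := by
      intro y
      have hcx : ∀ x : ∀ i, A i, (∀ i, i ≤ L → x i = x₀ i) ↔ x = x₀ := by
        intro x
        constructor
        · intro h; funext i
          refine h i (Fin.le_def.mpr ?_)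
          have hi := i.isLt
          show (i : ℕ) ≤ n - 1
          omega
        · intro h i _; rw [h]
      rw [Finset.sum_congr rfl fun x _ => if_congr (hcx x) rfl rfl]
      simp
    have hobj : aliceObjC A B α β c sF = (1/2) * ∑ y, β (Bool.xor (g y) c) y := by
      unfold aliceObjC
      rw [Finset.sum_comm]
      congr 1
      refine Finset.sum_congr rfl fun y _ => ?_
      have hterm : ∀ a : Bool, β (Bool.xor a c) y *
          ∑ x ∈ univ.filter (fun x => α a x ≠ 0), sF a x y
            = β (Bool.xor a c) y * (if a = g y then (1:ℝ) else 0) := by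
        intro a
        rw [Finset.filter_true_of_mem (fun x _ => (hαpos a x).ne')]
        rw [hsFdef]; dsimp only
        rw [← Finset.mul_sum, hsum1 y, mul_one]
      rw [Fintype.sum_bool, hterm, hterm]
      cases hgy : g y <;> simp [hgy]
    rw [hobj]
    have hmaxeq : ∀ y, β (Bool.xor (g y) c) y = max (β false y) (β true y) := by
      intro y
      cases c
      · by_cases h : β false y < β true y
        · have hgy : g y = true := by rw [hg]; exact decide_eq_true h
          rw [hgy]
          show β true y = max (β false y) (β true y)
          exact (max_eq_right h.le).symm
        · have hgy : g y = false := by rw [hg]; exact decide_eq_false h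
          rw [hgy]
          show β false y = max (β false y) (β true y)
          exact (max_eq_left (not_lt.mp h)).symm
      · by_cases h : β true y < β false y
        · have hgy : g y = true := by rw [hg]; exact decide_eq_true h
          rw [hgy]
          show β false y = max (β false y) (β true y)
          exact (max_eq_left h.le).symm
        · have hgy : g y = false := by rw [hg]; exact decide_eq_false h
          rw [hgy]
          show β true y = max (β false y) (β true y)
          exact (max_eq_right (not_lt.mp h)).symm
    rw [Finset.sum_congr rfl fun y _ => hmaxeq y]
    exact (half_sum_max _ _ (hβ false).2 (hβ true).2).symm

theorem classical_full_support {n : ℕ} (hn : 0 < n) (A B : Fin n → Type)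
    [∀ i, Fintype (A i)] [∀ i, Nonempty (A i)] [∀ i, Fintype (B i)] [∀ i, Nonempty (B i)]
    (α : Bool → ((i : Fin n) → A i) → ℝ) (β : Bool → ((i : Fin n) → B i) → ℝ)
    (hα : ∀ a, IsProbDist (α a)) (hβ : ∀ b, IsProbDist (β b))
    (hαpos : ∀ a x, 0 < α a x) (hβpos : ∀ b y, 0 < β b y)
    (CA CB : Bool → ℝ)
    (hCA : ∀ c, IsGreatest (aliceValsC A B hn α β c) (CA c))
    (hCB : ∀ c, IsGreatest (bobValsC A B hn α β c) (CB c)) :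
    CB false = 1 ∧ CB true = 1 ∧
    CA false = 1 / 2 + (1 / 2) * tdist (β false) (β true) ∧
    CA true = 1 / 2 + (1 / 2) * tdist (β false) (β true) := by
  have hD : ∀ c, CA c = 1 / 2 + (1 / 2) * tdist (β false) (β true) := by
    intro c
    refine le_antisymm ?_ ((hCA c).2 (alice_witness hn A B α β hβ hαpos c))
    obtain ⟨s, sF, hm, heq⟩ := (hCA c).1
    rw [heq]
    exact aliceObjC_le hn A B α β hβ hαpos c s sF hm
  have hB : ∀ c, CB c = 1 := by
    intro c
    obtain ⟨p, hp, heq⟩ := (hCB c).1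
    rw [heq]
    exact bobObjC_eq_one hn A B α β hα hβpos c p hp
  exact ⟨hB false, hB true, hD false, hD true⟩

end BCCF
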